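/- Let A and B be positive self-adjoint bounded operators on a Hilbert space and let s ∈ [0,1]. Then the operator norm satisfies ‖A^s B^s‖ ≤ ‖AB‖^s. -/

import Mathlib

/-!
For `m = (s + t) / 2` and `X = A^m B^m`, the C⋆-identity `‖X‖² = r(X⋆X)` (with `r` the spectral
radius) and `r(YZ) = r(ZY)` give
`‖X‖² = r(B^m A^t · A^s B^m) = r(A^s B^m · B^m A^t) ≤ ‖A^s B^s‖ ‖B^t A^t‖`,
so `s ↦ ‖A^s B^s‖` is midpoint log-convex. As the bound `‖AB‖^s` holds at `s = 0` and `s = 1`,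
it holds at every dyadic `s ∈ [0, 1]`, hence everywhere by continuity of `s ↦ A^s` on `(0, ∞)`.
-/

open Set Filter Topology

theorem spectralRadius_mul_comm_le {𝕜 A : Type*} [NormedField 𝕜] [Ring A] [Algebra 𝕜 A]
    (a b : A) : spectralRadius 𝕜 (a * b) ≤ spectralRadius 𝕜 (b * a) := by
  refine iSup₂_le fun k hk => ?_
  rcases eq_or_ne k 0 with rfl | hk0
  · simp
  · have : k ∈ spectrum 𝕜 (b * a) \ {0} := spectrum.nonzero_mul_comm (𝕜 := 𝕜) a b ▸ ⟨hk, hk0⟩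
    exact le_iSup₂ (α := ENNReal) k this.1

theorem spectralRadius_mul_comm {𝕜 A : Type*} [NormedField 𝕜] [Ring A] [Algebra 𝕜 A]
    (a b : A) : spectralRadius 𝕜 (a * b) = spectralRadius 𝕜 (b * a) :=
  (spectralRadius_mul_comm_le a b).antisymm (spectralRadius_mul_comm_le b a)

theorem CStarAlgebra.norm_sq_le_of_star_mul_self_eq_mul {A : Type*} [CStarAlgebra A] {x y z : A}
    (h : star x * x = y * z) : ‖x‖ ^ 2 ≤ ‖z * y‖ := by
  nontriviality A
  rw [← CStarAlgebra.toReal_spectralRadius_star_mul_self_eq_norm_sq, h, spectralRadius_mul_comm]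
  exact ENNReal.toReal_le_of_le_ofReal (norm_nonneg _)
    ((spectrum.spectralRadius_le_nnnorm _).trans_eq (ofReal_norm _).symm)

section CFCRpow

variable {A : Type*} [CStarAlgebra A]

theorem cfc_rpow_mul_cfc_rpow {a : A} (ha : spectrum ℝ a ⊆ Ici 0) {s t : ℝ} (hs : 0 ≤ s)
    (ht : 0 ≤ t) :
    cfc (fun x : ℝ => x ^ s) a * cfc (fun x : ℝ => x ^ t) a =
      cfc (fun x : ℝ => x ^ (s + t)) a := by
  rw [← cfc_mul _ _ a (Real.continuous_rpow_const hs).continuousOn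
    (Real.continuous_rpow_const ht).continuousOn]
  exact cfc_congr fun x hx => (Real.rpow_add_of_nonneg (ha hx) hs ht).symm

theorem cfc_rpow_zero {a : A} (ha : IsSelfAdjoint a) :
    cfc (fun x : ℝ => x ^ (0 : ℝ)) a = 1 := by
  simp only [Real.rpow_zero]
  exact cfc_const_one ℝ a

theorem cfc_rpow_one {a : A} (ha : IsSelfAdjoint a) : cfc (fun x : ℝ => x ^ (1 : ℝ)) a = a := by
  simp only [Real.rpow_one]
  exact cfc_id' ℝ a

theorem continuousOn_cfc_rpow (a : A) :
    ContinuousOn (fun s : ℝ => cfc (fun x : ℝ => x ^ s) a) (Ioi 0) := by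
  intro s₀ hs₀
  set U := Icc (s₀ / 2) (s₀ + 1)
  have hU : U ∈ 𝓝 s₀ := Icc_mem_nhds (by linarith [mem_Ioi.mp hs₀]) (by linarith)
  have hcont : ContinuousOn ↿(fun s x : ℝ => x ^ s) (U ×ˢ spectrum ℝ a) := fun p hp =>
    have hp₁ : 0 < p.1 := by linarith [hp.1.1, mem_Ioi.mp hs₀]
    ((Real.continuousAt_rpow p.swap (Or.inr hp₁)).comp
      continuous_swap.continuousAt).continuousWithinAt
  have hunif := ((isCompact_Icc.prod (spectrum.isCompact a)).uniformContinuousOn_of_continuous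
    hcont).tendstoUniformlyOn (mem_of_mem_nhds hU)
  rw [nhdsWithin_eq_nhds.mpr hU] at hunif
  refine (continuousAt_cfc_fun hunif ?_).continuousWithinAt
  filter_upwards [Ioi_mem_nhds hs₀] with s hs
  exact (Real.continuous_rpow_const hs.le).continuousOn

theorem norm_cfc_rpow_mul_cfc_rpow_midpoint_sq_le {a b : A} (ha : spectrum ℝ a ⊆ Ici 0)
    (hb : spectrum ℝ b ⊆ Ici 0) {s t : ℝ} (hs : 0 ≤ s) (ht : 0 ≤ t) :
    ‖cfc (fun x : ℝ => x ^ ((s + t) / 2)) a * cfc (fun x : ℝ => x ^ ((s + t) / 2)) b‖ ^ 2 ≤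
      ‖cfc (fun x : ℝ => x ^ s) a * cfc (fun x : ℝ => x ^ s) b‖ *
        ‖cfc (fun x : ℝ => x ^ t) a * cfc (fun x : ℝ => x ^ t) b‖ := by
  set m := (s + t) / 2 with hm_def
  have hm : 0 ≤ m := by positivity
  have hsq : ∀ {c : A} {u v : ℝ}, spectrum ℝ c ⊆ Ici 0 → 0 ≤ u → 0 ≤ v → u + v = s + t →
      cfc (fun x : ℝ => x ^ m) c * cfc (fun x : ℝ => x ^ m) c =
        cfc (fun x : ℝ => x ^ u) c * cfc (fun x : ℝ => x ^ v) c := fun hc hu hv huv => by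
    rw [cfc_rpow_mul_cfc_rpow hc hm hm, cfc_rpow_mul_cfc_rpow hc hu hv, huv, hm_def, add_halves]
  have hstar : ∀ (r : ℝ) (c : A),
      star (cfc (fun x : ℝ => x ^ r) c) = cfc (fun x : ℝ => x ^ r) c :=
    fun _ _ => IsSelfAdjoint.cfc.star_eq
  have key := CStarAlgebra.norm_sq_le_of_star_mul_self_eq_mul
    (x := cfc (fun x : ℝ => x ^ m) a * cfc (fun x : ℝ => x ^ m) b)
    (y := cfc (fun x : ℝ => x ^ m) b * cfc (fun x : ℝ => x ^ t) a)
    (z := cfc (fun x : ℝ => x ^ s) a * cfc (fun x : ℝ => x ^ m) b) (by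
      rw [star_mul, hstar, hstar, mul_assoc, ← mul_assoc (cfc _ a), hsq ha ht hs (add_comm t s)]
      noncomm_ring)
  calc _ ≤ _ := key
    _ = ‖(cfc (fun x : ℝ => x ^ s) a * cfc (fun x : ℝ => x ^ s) b) *
          star (cfc (fun x : ℝ => x ^ t) a * cfc (fun x : ℝ => x ^ t) b)‖ := by
      rw [star_mul, hstar, hstar, mul_assoc, ← mul_assoc (cfc _ b), hsq hb hs ht rfl]
      noncomm_ring
    _ ≤ _ := (norm_mul_le _ _).trans_eq (by rw [norm_star])

end CFCRpow

section MidpointLogConvex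

variable {g : ℝ → ℝ} {c : ℝ}

theorem le_rpow_dyadic_of_sq_midpoint_le (hc : 0 ≤ c) (hg : ∀ s ∈ Icc (0 : ℝ) 1, 0 ≤ g s)
    (hmid : ∀ s ∈ Icc (0 : ℝ) 1, ∀ t ∈ Icc (0 : ℝ) 1, g ((s + t) / 2) ^ 2 ≤ g s * g t)
    (h0 : g 0 ≤ 1) (h1 : g 1 ≤ c) (n k : ℕ) (hk : k ≤ 2 ^ n) :
    g (k / 2 ^ n) ≤ c ^ ((k : ℝ) / 2 ^ n) := by
  induction n generalizing k with
  | zero => interval_cases k <;> simpa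
  | succ n ih =>
    have hdyadic : ∀ j : ℕ, j ≤ 2 ^ n → (j : ℝ) / 2 ^ n ∈ Icc (0 : ℝ) 1 := fun j hj =>
      ⟨by positivity, div_le_one_of_le₀ (mod_cast hj) (by positivity)⟩
    obtain ⟨j, rfl | rfl⟩ := Nat.even_or_odd' k
    · have hj : j ≤ 2 ^ n := by rw [pow_succ] at hk; omega
      convert ih j hj using 2 <;> push_cast <;> field_simp <;> ring
    · have hj : j + 1 ≤ 2 ^ n := by rw [pow_succ] at hk; omega
      have hmidpoint : ((2 * j + 1 : ℕ) : ℝ) / 2 ^ (n + 1) =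
          ((j : ℝ) / 2 ^ n + ((j + 1 : ℕ) : ℝ) / 2 ^ n) / 2 := by
        push_cast; field_simp; ring
      have hsq : g (((2 * j + 1 : ℕ) : ℝ) / 2 ^ (n + 1)) ^ 2 ≤
          (c ^ (((2 * j + 1 : ℕ) : ℝ) / 2 ^ (n + 1))) ^ 2 := by
        rw [hmidpoint]
        refine (hmid _ (hdyadic j (by omega)) _ (hdyadic _ hj)).trans ?_
        refine (mul_le_mul (ih j (by omega)) (ih _ hj) (hg _ (hdyadic _ hj))
          (by positivity)).trans_eq ?_
        rw [sq, ← Real.rpow_add_of_nonneg hc (by positivity) (by positivity),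
          ← Real.rpow_add_of_nonneg hc (by positivity) (by positivity), add_halves]
      exact le_of_abs_le (abs_le_of_sq_le_sq hsq (by positivity))

theorem le_rpow_of_sq_midpoint_le (hc : 0 ≤ c) (hg : ∀ s ∈ Icc (0 : ℝ) 1, 0 ≤ g s)
    (hmid : ∀ s ∈ Icc (0 : ℝ) 1, ∀ t ∈ Icc (0 : ℝ) 1, g ((s + t) / 2) ^ 2 ≤ g s * g t)
    (h0 : g 0 ≤ 1) (h1 : g 1 ≤ c) (hcont : ContinuousOn g (Ioc 0 1)) {s : ℝ}
    (hs : s ∈ Icc (0 : ℝ) 1) : g s ≤ c ^ s := by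
  rcases hs.1.eq_or_lt with rfl | hs₀
  · simpa using h0
  set u : ℕ → ℝ := fun n => ⌊s * 2 ^ n⌋₊ / 2 ^ n
  have hu : Tendsto u atTop (𝓝 s) :=
    (tendsto_nat_floor_mul_div_atTop hs.1).comp (tendsto_pow_atTop_atTop_of_one_lt one_lt_two)
  have hfloor : ∀ n : ℕ, ⌊s * 2 ^ n⌋₊ ≤ 2 ^ n := fun n =>
    Nat.floor_le_of_le (by push_cast; nlinarith [hs.2, pow_pos (two_pos : (0 : ℝ) < 2) n])
  have hu_mem : ∀ᶠ n in atTop, u n ∈ Ioc 0 1 := (hu.eventually (Ioi_mem_nhds hs₀)).mono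
    fun n hn => ⟨hn, div_le_one_of_le₀ (mod_cast hfloor n) (by positivity)⟩
  refine le_of_tendsto_of_tendsto'
    ((hcont s ⟨hs₀, hs.2⟩).tendsto.comp (tendsto_nhdsWithin_iff.mpr ⟨hu, hu_mem⟩))
    ((Real.continuousAt_const_rpow' hs₀.ne').tendsto.comp hu) fun n => ?_
  exact le_rpow_dyadic_of_sq_midpoint_le hc hg hmid h0 h1 n _ (hfloor n)

end MidpointLogConvex

theorem CStarAlgebra.norm_cfc_rpow_mul_cfc_rpow_le {A : Type*} [CStarAlgebra A] {a b : A}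
    (ha : IsSelfAdjoint a) (hb : IsSelfAdjoint b) (ha_nonneg : spectrum ℝ a ⊆ Ici 0)
    (hb_nonneg : spectrum ℝ b ⊆ Ici 0) {s : ℝ} (hs : s ∈ Icc (0 : ℝ) 1) :
    ‖cfc (fun x : ℝ => x ^ s) a * cfc (fun x : ℝ => x ^ s) b‖ ≤ ‖a * b‖ ^ s := by
  refine le_rpow_of_sq_midpoint_le
    (g := fun s => ‖cfc (fun x : ℝ => x ^ s) a * cfc (fun x : ℝ => x ^ s) b‖) (norm_nonneg _)
    (fun _ _ => norm_nonneg _)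
    (fun s hs t ht => norm_cfc_rpow_mul_cfc_rpow_midpoint_sq_le ha_nonneg hb_nonneg
      hs.1 ht.1) ?_ ?_ ?_ hs
  · nontriviality A
    rw [cfc_rpow_zero ha, cfc_rpow_zero hb, mul_one, norm_one]
  · rw [cfc_rpow_one ha, cfc_rpow_one hb]
  · exact ((continuousOn_cfc_rpow a).mul (continuousOn_cfc_rpow b)).norm.mono Ioc_subset_Ioi_self

/-- **Cordes inequality.** If `A`, `B` are positive self-adjoint bounded operators
on a Hilbert space and `s ∈ [0,1]`, then `‖A^s B^s‖ ≤ ‖AB‖^s`, where fractional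
powers are defined via the continuous functional calculus. -/
theorem cordes_inequality
    {H : Type*} [NormedAddCommGroup H] [InnerProductSpace ℂ H] [CompleteSpace H]
    (A B : H →L[ℂ] H) (hA : IsSelfAdjoint A) (hB : IsSelfAdjoint B)
    (hApos : spectrum ℝ A ⊆ Set.Ici 0) (hBpos : spectrum ℝ B ⊆ Set.Ici 0)
    (s : ℝ) (hs : s ∈ Set.Icc (0:ℝ) 1) :
    ‖cfc (fun t : ℝ => t ^ s) A * cfc (fun t : ℝ => t ^ s) B‖ ≤ ‖A * B‖ ^ s :=
  CStarAlgebra.norm_cfc_rpow_mul_cfc_rpow_le hA hB hApos hBpos hs
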